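/- arXiv:2110.05374 — 3 statements merged into one kernel-verified Lean document; each statement's English description precedes it below -/
import Mathlib

section
/- For every graph G on vertex set [n] and every c = (c₁,…,cₙ) ∈ ℝ₊ⁿ, D(G,c) ≤ χ_f(G) · ‖c‖₂², where D(G,c) := min over fractional forest vertex covers {(F_k, w_k)}_k of G of ( ∑_k w_k · sqrt( ∑_{{i,j} ∈ E(G[F_k])} (c_i + c_j)² + ∑_{T ∈ 𝒯(F_k)} c_{min,k,T}² ) )², with c_{min,k,T} := min{ c_i : i ∈ T }, χ_f(G) is the fractional chromatic number of G, and ‖c‖₂² = ∑_{i=1}^n c_i². -/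
open MeasureTheory ProbabilityTheory BigOperators

open Classical in
/-- `f` is `c`-Lipschitz with respect to the Hamming metric. -/
def CLipschitzOn {ι : Type*} [Fintype ι] {Ω : ι → Type*} (c : ι → ℝ)
    (f : (∀ i, Ω i) → ℝ) : Prop :=
  ∀ x y : ∀ i, Ω i, |f x - f y| ≤ ∑ i, if x i ≠ y i then c i else 0

/-- `X` is `G`-dependent: families of variables indexed by disjoint non-adjacent
vertex sets are independent. -/
def GDependent {α : Type*} [MeasurableSpace α] (μ : Measure α)
    {n : ℕ} {Ω : Fin n → Type*} [∀ i, MeasurableSpace (Ω i)]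
    (G : SimpleGraph (Fin n)) (X : ∀ i, α → Ω i) : Prop :=
  ∀ S T : Finset (Fin n), Disjoint S T →
    (∀ i ∈ S, ∀ j ∈ T, ¬ G.Adj i j) →
    IndepFun (fun a => fun i : S => X i.1 a) (fun a => fun j : T => X j.1 a) μ

/-- The function sending an unordered pair `{i, j}` to `(w i + w j)^2`. -/
def sym2Sq {ι : Type*} (w : ι → ℝ) : Sym2 ι → ℝ :=
  Sym2.lift ⟨fun i j => (w i + w j) ^ 2, fun i j => by ring_nf⟩

open Classical in
/-- `∑_{{i,j} ∈ E(G)} (w i + w j)^2`. -/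
noncomputable def edgeWeightSum {ι : Type*} [Fintype ι] (G : SimpleGraph ι) (w : ι → ℝ) : ℝ :=
  ∑ e ∈ G.edgeFinset, sym2Sq w e

open Classical in
/-- Sum, over the connected components (trees) `T` of `G`, of the squared minimum
of `w` over the vertices of `T`. -/
noncomputable def compMinSqSum {ι : Type*} [Fintype ι] (G : SimpleGraph ι) (w : ι → ℝ) : ℝ :=
  ∑ K : G.ConnectedComponent, (⨅ v : {v // G.connectedComponentMk v = K}, w v.1) ^ 2

/-- A fractional forest vertex cover of `G`: a finite family of pairs `(F k, w k)` with
`w k ∈ [0,1]`, `∑_{k : v ∈ F k} w k = 1` for every vertex `v`, and every induced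
subgraph `G[F k]` a forest. -/
structure FFC {n : ℕ} (G : SimpleGraph (Fin n)) where
  K : ℕ
  F : Fin K → Finset (Fin n)
  w : Fin K → ℝ
  w_nonneg : ∀ k, 0 ≤ w k
  w_le_one : ∀ k, w k ≤ 1
  cover : ∀ v : Fin n, ∑ k ∈ Finset.univ.filter (fun k => v ∈ F k), w k = 1
  acyclic : ∀ k, (G.induce ((F k : Set (Fin n)))).IsAcyclic

/-- `(∑_k w_k √(∑_{{i,j} ∈ E(G[F_k])} (c_i+c_j)² + ∑_{T ∈ 𝒯(F_k)} c_{min,k,T}²))²`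
for a fractional forest vertex cover. -/
noncomputable def FFC.value {n : ℕ} {G : SimpleGraph (Fin n)} (c : Fin n → ℝ) (C : FFC G) : ℝ :=
  (∑ k : Fin C.K, C.w k * Real.sqrt
      (edgeWeightSum (G.induce ((C.F k : Set (Fin n)))) (fun v => c v.1)
        + compMinSqSum (G.induce ((C.F k : Set (Fin n)))) (fun v => c v.1))) ^ 2

/-- `D(G, c)`: the minimum of `FFC.value` over all fractional forest vertex covers of `G`. -/
noncomputable def DFFC {n : ℕ} (G : SimpleGraph (Fin n)) (c : Fin n → ℝ) : ℝ :=
  sInf (Set.range fun C : FFC G => C.value c)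

/-- `f` is forest-decomposable `c`-Lipschitz with respect to `G`. -/
def ForestDecomposable {n : ℕ} {Ω : Fin n → Type*} (G : SimpleGraph (Fin n))
    (c : Fin n → ℝ) (f : (∀ i, Ω i) → ℝ) : Prop :=
  ∀ C : FFC G, ∃ g : (k : Fin C.K) → ((i : C.F k) → Ω i.1) → ℝ,
    (∀ k, CLipschitzOn (fun i : C.F k => c i.1) (g k)) ∧
    ∀ x : ∀ i, Ω i, f x = ∑ k : Fin C.K, C.w k * g k (fun i => x i.1)

/-- `I` is an independent set of `G`. -/
def IsIndepFinset {n : ℕ} (G : SimpleGraph (Fin n)) (I : Finset (Fin n)) : Prop :=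
  ∀ i ∈ I, ∀ j ∈ I, ¬ G.Adj i j

/-- `g` is a fractional coloring of `G`: a `[0,1]`-valued weighting of the independent
sets of `G` such that every vertex receives total weight at least `1`. -/
def IsFracColoring {n : ℕ} (G : SimpleGraph (Fin n)) (g : Finset (Fin n) → ℝ) : Prop :=
  (∀ I, 0 ≤ g I ∧ g I ≤ 1) ∧ (∀ I, ¬ IsIndepFinset G I → g I = 0) ∧
    ∀ v : Fin n, 1 ≤ ∑ I ∈ Finset.univ.filter (fun I : Finset (Fin n) => v ∈ I), g I

/-- The fractional chromatic number of `G`. -/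
noncomputable def fracChromatic {n : ℕ} (G : SimpleGraph (Fin n)) : ℝ :=
  sInf {x : ℝ | ∃ g : Finset (Fin n) → ℝ, IsFracColoring G g ∧ x = ∑ I : Finset (Fin n), g I}


/-!
A fractional colouring can be trimmed to an exact fractional cover by independent sets without
changing its total weight: at a vertex `v` covered with weight `s ≥ 1`, replace each set `F` of
weight `w` by `F` with weight `w / s` and by `F \ {v}` with weight `w (1 - 1 / s)`. For an
independent set `F` the graph `G[F]` has no edges and its trees are the singletons, so the
term under the square root is `a_F = ∑_{v ∈ F} c_v²`, and Cauchy–Schwarz gives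
`(∑ w_F √a_F)² ≤ (∑ w_F) (∑ w_F a_F) = (∑ w_F) ‖c‖²`.
-/

open Finset

section Graph

variable {ι : Type*} [Fintype ι]

theorem edgeWeightSum_bot (w : ι → ℝ) : edgeWeightSum (⊥ : SimpleGraph ι) w = 0 := by
  refine sum_eq_zero fun e he => ?_
  simp at he

theorem compMinSqSum_bot (w : ι → ℝ) : compMinSqSum (⊥ : SimpleGraph ι) w = ∑ v, w v ^ 2 := by
  have hbij : Function.Bijective (⊥ : SimpleGraph ι).connectedComponentMk :=
    ⟨fun _ _ h => SimpleGraph.reachable_bot.1 (SimpleGraph.ConnectedComponent.exact h),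
      fun K => K.exists_rep⟩
  rw [compMinSqSum]
  refine Finset.sum_equiv (Equiv.ofBijective _ hbij).symm (by simp) fun K _ => ?_
  obtain ⟨u, rfl⟩ := hbij.2 K
  let : Unique {v // (⊥ : SimpleGraph ι).connectedComponentMk v =
      (⊥ : SimpleGraph ι).connectedComponentMk u} :=
    { default := ⟨u, rfl⟩
      uniq := fun v => Subtype.ext (hbij.1 v.2) }
  rw [ciInf_unique, Equiv.ofBijective_symm_apply_apply]
  rfl

end Graph

section IndepFinset

variable {n : ℕ} {G : SimpleGraph (Fin n)}

theorem isIndepFinset_empty : IsIndepFinset G ∅ := by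
  simp [IsIndepFinset]

theorem IsIndepFinset.mono {I J : Finset (Fin n)} (hJ : IsIndepFinset G J) (h : I ⊆ J) :
    IsIndepFinset G I :=
  fun i hi j hj => hJ i (h hi) j (h hj)

theorem IsIndepFinset.induce_eq_bot {I : Finset (Fin n)} (hI : IsIndepFinset G I) :
    G.induce (I : Set (Fin n)) = ⊥ := by
  ext u v
  exact iff_of_false (hI u u.2 v v.2) id

end IndepFinset

section WeightedFamily

variable {α : Type*} [DecidableEq α] {K : ℕ}

def coverWeight (F : Fin K → Finset α) (w : Fin K → ℝ) (v : α) : ℝ :=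
  ∑ k with v ∈ F k, w k

def splitSets (v : α) (F : Fin K → Finset α) : Fin (K + K) → Finset α :=
  Fin.append F fun k => (F k).erase v

def splitWeights (t : ℝ) (w : Fin K → ℝ) : Fin (K + K) → ℝ :=
  Fin.append (fun k => t * w k) fun k => (1 - t) * w k

theorem sum_splitWeights (t : ℝ) (w : Fin K → ℝ) : ∑ k, splitWeights t w k = ∑ k, w k := by
  simp only [splitWeights, Fin.sum_univ_add, Fin.append_left, Fin.append_right, ← mul_sum]
  ring

theorem splitWeights_mem_Icc {t : ℝ} (ht : t ∈ Set.Icc (0 : ℝ) 1) {w : Fin K → ℝ}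
    (hw : ∀ k, w k ∈ Set.Icc (0 : ℝ) 1) (k : Fin (K + K)) :
    splitWeights t w k ∈ Set.Icc (0 : ℝ) 1 := by
  obtain ⟨ht0, ht1⟩ := ht
  refine Fin.addCases (fun k => ?_) (fun k => ?_) k <;>
    obtain ⟨hw0, hw1⟩ := hw k <;>
    simp only [splitWeights, Fin.append_left, Fin.append_right, Set.mem_Icc] <;>
    constructor <;> nlinarith

theorem exists_splitSets_subset (v : α) (F : Fin K → Finset α) (k : Fin (K + K)) :
    ∃ j, splitSets v F k ⊆ F j := by
  refine Fin.addCases (fun k => ⟨k, ?_⟩) (fun k => ⟨k, ?_⟩) k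
  · simp only [splitSets, Fin.append_left, subset_refl]
  · simp only [splitSets, Fin.append_right, erase_subset]

theorem coverWeight_splitSets_of_ne {v x : α} (hx : x ≠ v) (t : ℝ) (F : Fin K → Finset α)
    (w : Fin K → ℝ) : coverWeight (splitSets v F) (splitWeights t w) x = coverWeight F w x := by
  rw [coverWeight, coverWeight, sum_filter, sum_filter, Fin.sum_univ_add]
  simp only [splitSets, splitWeights, Fin.append_left, Fin.append_right, mem_erase, ne_eq, hx,
    not_false_eq_true, true_and, ← sum_add_distrib]
  refine sum_congr rfl fun k _ => ?_
  split_ifs <;> ring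

theorem coverWeight_splitSets_self (v : α) (t : ℝ) (F : Fin K → Finset α) (w : Fin K → ℝ) :
    coverWeight (splitSets v F) (splitWeights t w) v = t * coverWeight F w v := by
  rw [coverWeight, coverWeight, sum_filter, sum_filter, Fin.sum_univ_add]
  simp [splitSets, splitWeights, mul_sum, -Fin.natAdd_eq_addNat]

theorem sum_mul_sum_eq_sum_mul_coverWeight [Fintype α] (F : Fin K → Finset α) (w : Fin K → ℝ)
    (f : α → ℝ) : ∑ k, w k * ∑ v ∈ F k, f v = ∑ v, f v * coverWeight F w v := by
  calc ∑ k, w k * ∑ v ∈ F k, f v = ∑ k, ∑ v, if v ∈ F k then w k * f v else 0 := by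
        simp only [mul_sum, sum_ite_mem, univ_inter]
    _ = ∑ v, f v * coverWeight F w v := by
        rw [sum_comm]
        refine sum_congr rfl fun v _ => ?_
        rw [coverWeight, sum_filter, mul_sum]
        refine sum_congr rfl fun k _ => ?_
        split_ifs <;> ring

theorem exists_refinement_coverWeight_eq_one_on (S : Finset α) {F : Fin K → Finset α}
    {w : Fin K → ℝ} (hw : ∀ k, w k ∈ Set.Icc (0 : ℝ) 1) (hF : ∀ v, 1 ≤ coverWeight F w v) :
    ∃ (K' : ℕ) (F' : Fin K' → Finset α) (w' : Fin K' → ℝ), (∀ k, w' k ∈ Set.Icc (0 : ℝ) 1) ∧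
      (∀ k, ∃ j, F' k ⊆ F j) ∧ (∀ v, 1 ≤ coverWeight F' w' v) ∧
      (∀ v ∈ S, coverWeight F' w' v = 1) ∧ ∑ k, w' k = ∑ k, w k := by
  induction S using Finset.induction_on with
  | empty => exact ⟨K, F, w, hw, fun k => ⟨k, subset_refl _⟩, hF, by simp, rfl⟩
  | insert a S _ ih =>
    obtain ⟨K', F', w', hw', hsub, hge, heq, hsum⟩ := ih
    have hs : 1 ≤ coverWeight F' w' a := hge a
    have hcov (v : α) : coverWeight (splitSets a F') (splitWeights (coverWeight F' w' a)⁻¹ w') v =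
        if v = a then 1 else coverWeight F' w' v := by
      split_ifs with hv
      · rw [hv, coverWeight_splitSets_self, inv_mul_cancel₀ (zero_lt_one.trans_le hs).ne']
      · exact coverWeight_splitSets_of_ne hv _ _ _
    refine ⟨K' + K', splitSets a F', splitWeights (coverWeight F' w' a)⁻¹ w',
      splitWeights_mem_Icc ⟨inv_nonneg.2 (zero_le_one.trans hs), inv_le_one_of_one_le₀ hs⟩ hw',
      fun k => ?_, fun v => ?_, fun v hv => ?_, (sum_splitWeights _ _).trans hsum⟩
    · obtain ⟨j, hj⟩ := exists_splitSets_subset a F' k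
      obtain ⟨i, hi⟩ := hsub j
      exact ⟨i, hj.trans hi⟩
    · rw [hcov]
      split_ifs
      exacts [le_rfl, hge v]
    · rw [hcov]
      split_ifs with hva
      · rfl
      · exact heq v ((mem_insert.1 hv).resolve_left hva)

theorem exists_refinement_coverWeight_eq_one [Fintype α] {F : Fin K → Finset α}
    {w : Fin K → ℝ} (hw : ∀ k, w k ∈ Set.Icc (0 : ℝ) 1) (hF : ∀ v, 1 ≤ coverWeight F w v) :
    ∃ (K' : ℕ) (F' : Fin K' → Finset α) (w' : Fin K' → ℝ), (∀ k, w' k ∈ Set.Icc (0 : ℝ) 1) ∧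
      (∀ k, ∃ j, F' k ⊆ F j) ∧ (∀ v, coverWeight F' w' v = 1) ∧ ∑ k, w' k = ∑ k, w k := by
  obtain ⟨K', F', w', hw', hsub, -, heq, hsum⟩ :=
    exists_refinement_coverWeight_eq_one_on univ hw hF
  exact ⟨K', F', w', hw', hsub, fun v => heq v (mem_univ v), hsum⟩

end WeightedFamily

section Cover

variable {n : ℕ} {G : SimpleGraph (Fin n)}

theorem FFC.value_le_of_isIndepFinset (c : Fin n → ℝ) (C : FFC G)
    (hC : ∀ k, IsIndepFinset G (C.F k)) : C.value c ≤ (∑ k, C.w k) * ∑ i, c i ^ 2 := by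
  set a : Fin C.K → ℝ := fun k => ∑ v ∈ C.F k, c v ^ 2
  have ha : ∀ k, 0 ≤ a k := fun k => sum_nonneg fun v _ => sq_nonneg (c v)
  have hterm (k : Fin C.K) :
      edgeWeightSum (G.induce (C.F k : Set (Fin n))) (fun v => c v.1)
        + compMinSqSum (G.induce (C.F k : Set (Fin n))) (fun v => c v.1) = a k := by
    rw [(hC k).induce_eq_bot, edgeWeightSum_bot, compMinSqSum_bot, zero_add]
    exact sum_coe_sort (C.F k) fun v => c v ^ 2
  have hcover : ∀ v, coverWeight C.F C.w v = 1 := C.cover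
  calc C.value c = (∑ k, C.w k * √(a k)) ^ 2 := by simp only [FFC.value, hterm]
    _ ≤ (∑ k, C.w k) * ∑ k, C.w k * a k :=
      sum_sq_le_sum_mul_sum_of_sq_le_mul _ (fun k _ => C.w_nonneg k)
        (fun k _ => mul_nonneg (C.w_nonneg k) (ha k))
        (fun k _ => by rw [mul_pow, Real.sq_sqrt (ha k), sq, mul_assoc])
    _ = (∑ k, C.w k) * ∑ i, c i ^ 2 := by
      rw [sum_mul_sum_eq_sum_mul_coverWeight]
      simp only [hcover, mul_one]

theorem IsFracColoring.exists_FFC_isIndepFinset {g : Finset (Fin n) → ℝ}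
    (hg : IsFracColoring G g) :
    ∃ C : FFC G, (∀ k, IsIndepFinset G (C.F k)) ∧ ∑ k, C.w k = ∑ I, g I := by
  classical
  obtain ⟨hg01, hg_indep, hg_cover⟩ := hg
  let e := (Fintype.equivFin (Finset (Fin n))).symm
  -- Non-independent sets carry weight zero, so replacing them by `∅` leaves every cover unchanged.
  let F : Fin _ → Finset (Fin n) := fun k => if IsIndepFinset G (e k) then e k else ∅
  have hF : ∀ k, IsIndepFinset G (F k) := fun k => by
    by_cases h : IsIndepFinset G (e k)
    · simp [F, h]
    · simpa [F, h] using isIndepFinset_empty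
  have hcov (v : Fin n) : 1 ≤ coverWeight F (g ∘ e) v := by
    refine (hg_cover v).trans_eq ?_
    rw [coverWeight, sum_filter, sum_filter]
    refine Fintype.sum_equiv e.symm _ _ fun I => ?_
    by_cases h : IsIndepFinset G I <;> simp [F, e, h, hg_indep]
  obtain ⟨K, F', w, hw, hsub, hexact, hsum⟩ := exists_refinement_coverWeight_eq_one
    (fun k => ⟨(hg01 (e k)).1, (hg01 (e k)).2⟩) hcov
  have hF' (k : Fin K) : IsIndepFinset G (F' k) := by
    obtain ⟨j, hj⟩ := hsub k
    exact (hF j).mono hj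
  refine ⟨⟨K, F', w, fun k => (hw k).1, fun k => (hw k).2, hexact, fun k => ?_⟩, hF', ?_⟩
  · rw [(hF' k).induce_eq_bot]
    exact SimpleGraph.isAcyclic_bot
  · exact hsum.trans (e.sum_comp g)

theorem exists_isFracColoring : ∃ g : Finset (Fin n) → ℝ, IsFracColoring G g := by
  classical
  refine ⟨fun I => if I.card = 1 then 1 else 0, fun I => ?_, fun I hI => ?_, fun v => ?_⟩
  · dsimp only
    split_ifs <;> norm_num
  · dsimp only
    rw [if_neg]
    intro hI1
    obtain ⟨a, rfl⟩ := card_eq_one.1 hI1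
    exact hI fun i hi j hj => by simp_all
  · refine le_of_eq_of_le ?_ (single_le_sum (fun I _ => ?_)
      (mem_filter.2 ⟨mem_univ {v}, mem_singleton_self v⟩))
    · simp
    · split_ifs <;> norm_num

theorem DFFC_le_value (c : Fin n → ℝ) (C : FFC G) : DFFC G c ≤ C.value c :=
  csInf_le ⟨0, by rintro _ ⟨C, rfl⟩; exact sq_nonneg _⟩ ⟨C, rfl⟩

end Cover

theorem DFFC_le_fracChromatic_mul_general {n : ℕ} (G : SimpleGraph (Fin n))
    (c : Fin n → ℝ) :
    DFFC G c ≤ fracChromatic G * ∑ i, c i ^ 2 := by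
  have hnorm : 0 ≤ ∑ i, c i ^ 2 := by positivity
  obtain ⟨g₀, hg₀⟩ := exists_isFracColoring (G := G)
  rw [fracChromatic, mul_comm, ← smul_eq_mul, ← Real.sInf_smul_of_nonneg hnorm]
  refine le_csInf (Set.Nonempty.smul_set ⟨_, g₀, hg₀, rfl⟩) ?_
  rintro _ ⟨_, ⟨g, hg, rfl⟩, rfl⟩
  obtain ⟨C, hC_indep, hC_weight⟩ := hg.exists_FFC_isIndepFinset
  calc DFFC G c ≤ C.value c := DFFC_le_value c C
    _ ≤ (∑ k, C.w k) * ∑ i, c i ^ 2 := C.value_le_of_isIndepFinset c hC_indep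
    _ = _ := by rw [hC_weight]; exact mul_comm _ _

theorem DFFC_le_fracChromatic_mul {n : ℕ} (G : SimpleGraph (Fin n))
    (c : Fin n → ℝ) (hc : ∀ i, 0 ≤ c i) :
    DFFC G c ≤ fracChromatic G * ∑ i, c i ^ 2 :=
  DFFC_le_fracChromatic_mul_general G c
end

section
/- Let G be a tree on [n], rooted at vertex n, Ordered (j is a descendant of i only if j < i), with parent map p and S_i := {i+1,…,n} ∖ {p_i}. Let X be G-dependent with values in Ω = Ω₁×⋯×Ωₙ. Then for every i ∈ [n−1], every x ∈ Ω, and every x'_i ∈ Ω_i, there exists a coupling, i.e., a pair of Ω-valued random vectors (Y, Z) on a common probability space, such that: (i) the law of Y equals the conditional law of X given X_{[i]} = x_{[i]}; (ii) the law of Z equals the conditional law of X given X_{[i−1]} = x_{[i−1]} and X_i = x'_i; (iii) Y_{[i]} = x_{[i]} and Z_{[i]} = (x₁,…,x_{i−1}, x'_i); and (iv) Y_j = Z_j for every j ∈ S_i, so that Y and Z can differ only in coordinates i and p_i. -/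
/-- A bundled measurable space. -/
structure BundledMeasSpace where
  /-- the underlying type -/
  carrier : Type
  [inst : MeasurableSpace carrier]

attribute [instance] BundledMeasSpace.inst


open MeasureTheory ProbabilityTheory BigOperators

/-- `p` is the parent map of the tree `G` on `{0, …, n-1}`, rooted at the last vertex
`n-1`, in the Ordered sense: every non-root vertex `i` is adjacent to its parent `p i`
and satisfies `i < p i` (descendants have smaller labels). -/
def IsOrderedParentMap {n : ℕ} (G : SimpleGraph (Fin n)) (p : Fin n → Fin n) : Prop :=
  ∀ i : Fin n, (i : ℕ) + 1 < n → G.Adj i (p i) ∧ i < p i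

/-- `j` belongs to the subtree rooted at `i` (i.e. `j` is `i` or a descendant of `i`)
for the parent map `p`: iterating `p` from `j` reaches `i`. -/
def InSubtree {n : ℕ} (p : Fin n → Fin n) (i j : Fin n) : Prop :=
  ∃ k : ℕ, p^[k] j = i

/-- A coupling `(Y, Z)` on a common probability space whose marginals are the conditional
laws of `X` given `X_{[i]} = x_{[i]}` and given `X_{[i-1]} = x_{[i-1]}, X_i = x'`,
with `Y_{[i]} = x_{[i]}`, `Z_{[i]} = (x_{[i-1]}, x')`, and `Y_j = Z_j` for every
`j ∈ S_i = {i+1, …, n} \ {p_i}`, so `Y` and `Z` differ only in coordinates `i`, `p_i`. -/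
structure CouplingWitness {n : ℕ} {Ω : Fin n → Type*} [∀ i, MeasurableSpace (Ω i)]
    {α : Type*} [MeasurableSpace α] (μ : Measure α)
    (X : ∀ i, α → Ω i) (p : Fin n → Fin n) (v : Fin n)
    (x : ∀ j, Ω j) (x' : Ω v) where
  S : BundledMeasSpace
  ν : Measure S.carrier
  prob : IsProbabilityMeasure ν
  Y : ∀ j, S.carrier → Ω j
  Z : ∀ j, S.carrier → Ω j
  measY : ∀ j, Measurable (Y j)
  measZ : ∀ j, Measurable (Z j)
  lawY : ν.map (fun b j => Y j b)
    = (μ[|{a | ∀ j, j ≤ v → X j a = x j}]).map (fun a j => X j a)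
  lawZ : ν.map (fun b j => Z j b)
    = (μ[|{a | (∀ j, j < v → X j a = x j) ∧ X v a = x'}]).map (fun a j => X j a)
  eqY : ∀ b, ∀ j, j ≤ v → Y j b = x j
  eqZ_lt : ∀ b, ∀ j, j < v → Z j b = x j
  eqZ_v : ∀ b, Z v b = x'
  agree : ∀ b, ∀ j, v < j → j ≠ p v → Y j b = Z j b
  differ_only : ∀ b, ∀ j, j ≠ v → j ≠ p v → Y j b = Z j b

/-!
Let `D` be the subtree of `v` and `S` the vertices outside `D ∪ {p v}`. Since `G` is a tree
with ordered parent map, no edge joins `D` to `S`, so `X_D` and `X_S` are independent. Both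
conditioning events have the form `{X_D = d} ∩ {X_S ∈ T}` with the same `T` (the prescribed
values `x` and `(x_{[v-1]}, x')` differ only at `v ∈ D`), hence `X_S` has the same conditional law
under both. Gluing the two conditional laws of `(X_S, X)` along `X_S` by disintegration gives the
coupling; rebuilding `Y` and `Z` from the shared `X_S`-coordinate makes them agree on `S` at every
sample point, not merely almost surely.
-/

open MeasureTheory ProbabilityTheory

section OrderedTree

variable {n : ℕ} {p : Fin n → Fin n} {v i j : Fin n}

/-- The bound `p^[m] j < v` keeps the path away from the root, whose `p`-value
`IsOrderedParentMap` leaves unconstrained. -/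
def InLowerSubtree (p : Fin n → Fin n) (v j : Fin n) : Prop :=
  ∃ k : ℕ, p^[k] j = v ∧ ∀ m < k, p^[m] j < v

theorem inLowerSubtree_self (p : Fin n → Fin n) (v : Fin n) : InLowerSubtree p v v :=
  ⟨0, rfl, fun _ hm => absurd hm (Nat.not_lt_zero _)⟩

theorem InLowerSubtree.le (h : InLowerSubtree p v j) : j ≤ v := by
  obtain ⟨k, hk, hlt⟩ := h
  rcases Nat.eq_zero_or_pos k with rfl | hk0
  · exact hk.le
  · exact (hlt 0 hk0).le

theorem InLowerSubtree.parent (h : InLowerSubtree p v j) (hj : j ≠ v) :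
    InLowerSubtree p v (p j) := by
  obtain ⟨_ | k, hk, hlt⟩ := h
  · exact absurd hk hj
  · refine ⟨k, by rwa [← Function.iterate_succ_apply], fun m hm => ?_⟩
    rw [← Function.iterate_succ_apply]
    exact hlt (m + 1) (by omega)

theorem InLowerSubtree.of_parent (hj : j < v) (h : InLowerSubtree p v (p j)) :
    InLowerSubtree p v j := by
  obtain ⟨k, hk, hlt⟩ := h
  refine ⟨k + 1, by rwa [Function.iterate_succ_apply], fun m hm => ?_⟩
  rcases m with _ | m
  · exact hj
  · rw [Function.iterate_succ_apply]
    exact hlt m (by omega)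

theorem IsOrderedParentMap.edgeFinset_eq {G : SimpleGraph (Fin n)} [DecidableRel G.Adj]
    (hG : G.IsTree) (hp : IsOrderedParentMap G p) :
    G.edgeFinset = ({i | (i : ℕ) + 1 < n} : Finset (Fin n)).image fun i => s(i, p i) := by
  symm
  refine Finset.eq_of_subset_of_card_le ?_ ?_
  · simp only [Finset.subset_iff, Finset.mem_image, Finset.mem_filter, Finset.mem_univ,
      true_and, SimpleGraph.mem_edgeFinset, forall_exists_index, and_imp]
    rintro _ i hi rfl
    exact (hp i hi).1
  · have hinj : Set.InjOn (fun i => s(i, p i)) {i : Fin n | (i : ℕ) + 1 < n} := by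
      intro i hi j hj hij
      rcases Sym2.eq_iff.1 hij with ⟨h, _⟩ | ⟨hij, hji⟩
      · exact h
      · have hij' : i < j := hji ▸ (hp i hi).2
        exact absurd (hij ▸ (hp j hj).2) hij'.not_gt
    have hcard : ({i | (i : ℕ) + 1 < n} : Finset (Fin n)).card = n - 1 := by
      rw [Finset.filter_congr (q := fun i : Fin n => (i : ℕ) < n - 1) (by omega),
        Fin.card_filter_val_lt]
      omega
    have hedges := hG.card_edgeFinset
    rw [Fintype.card_fin] at hedges
    rw [Finset.card_image_of_injOn (by simpa using hinj), hcard]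
    omega

theorem IsOrderedParentMap.adj_iff_eq_parent {G : SimpleGraph (Fin n)} (hG : G.IsTree)
    (hp : IsOrderedParentMap G p) (hij : i < j) : G.Adj i j ↔ j = p i := by
  classical
  constructor
  · intro hadj
    have he : s(i, j) ∈ G.edgeFinset := SimpleGraph.mem_edgeFinset.2 hadj
    rw [hp.edgeFinset_eq hG] at he
    obtain ⟨k, hk, hki⟩ := Finset.mem_image.1 he
    rcases Sym2.eq_iff.1 hki with ⟨rfl, h⟩ | ⟨rfl, h⟩
    · exact h.symm
    · exact absurd (hij.trans ((hp k (by simpa using hk)).2.trans_eq h)) (lt_irrefl _)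
  · rintro rfl
    exact (hp i (by have := (p i).2; have : (i : ℕ) < p i := hij; omega)).1

theorem not_adj_of_inLowerSubtree {G : SimpleGraph (Fin n)} (hG : G.IsTree)
    (hp : IsOrderedParentMap G p) (hi : InLowerSubtree p v i) (hj : ¬ InLowerSubtree p v j)
    (hjp : j ≠ p v) : ¬ G.Adj i j := by
  intro hadj
  rcases lt_trichotomy i j with hij | rfl | hji
  · rw [hp.adj_iff_eq_parent hG hij] at hadj
    subst hadj
    rcases eq_or_ne i v with rfl | hiv
    · exact hjp rfl
    · exact hj (hi.parent hiv)
  · exact hj hi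
  · have hjv : j < v := hji.trans_le hi.le
    exact hj (.of_parent hjv ((hp.adj_iff_eq_parent hG hji).1 hadj.symm ▸ hi))

end OrderedTree

section Coupling

variable {α β γ : Type*} [MeasurableSpace α] [MeasurableSpace β] [MeasurableSpace γ]

theorem ProbabilityTheory.IndepFun.map_cond_inter_preimage {μ : Measure α} [IsFiniteMeasure μ]
    {U : α → β} {V : α → γ} (h : IndepFun U V μ) (hU : Measurable U) (hV : Measurable V)
    {s : Set β} {t : Set γ} (hs : MeasurableSet s) (ht : MeasurableSet t)
    (hst : μ (U ⁻¹' s ∩ V ⁻¹' t) ≠ 0) :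
    (μ[|U ⁻¹' s ∩ V ⁻¹' t]).map V = (μ[|V ⁻¹' t]).map V := by
  have hUs : μ (U ⁻¹' s) ≠ 0 := fun h0 => hst (measure_mono_null Set.inter_subset_left h0)
  ext B hB
  rw [Measure.map_apply hV hB, Measure.map_apply hV hB, cond_apply ((hU hs).inter (hV ht)),
    cond_apply (hV ht), Set.inter_assoc, ← Set.preimage_inter,
    h.measure_inter_preimage_eq_mul _ _ hs (ht.inter hB), h.measure_inter_preimage_eq_mul _ _ hs ht,
    ENNReal.mul_inv (.inl hUs) (.inl (measure_ne_top μ _)), mul_mul_mul_comm,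
    ENNReal.inv_mul_cancel hUs (measure_ne_top μ _), one_mul]

theorem exists_gluing_of_fst_eq [StandardBorelSpace γ] [Nonempty γ]
    {ρ₁ ρ₂ : Measure (β × γ)} [IsFiniteMeasure ρ₁] [IsFiniteMeasure ρ₂]
    (h : ρ₁.fst = ρ₂.fst) :
    ∃ π : Measure (β × γ × γ),
      π.map (Prod.map id Prod.fst) = ρ₁ ∧ π.map (Prod.map id Prod.snd) = ρ₂ := by
  refine ⟨ρ₁.fst ⊗ₘ (ρ₁.condKernel ×ₖ ρ₂.condKernel), ?_, ?_⟩
  · rw [← Measure.compProd_map measurable_fst, ← Kernel.fst_eq, Kernel.fst_prod,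
      ρ₁.disintegrate]
  · rw [← Measure.compProd_map measurable_snd, ← Kernel.snd_eq, Kernel.snd_prod, h,
      ρ₂.disintegrate]

/-- The sample space of a `CouplingWitness` must live in `Type`, while the `Ω i` may live in any
universe. -/
theorem exists_measure_real_map_eq {E : Type*} [MeasurableSpace E] [StandardBorelSpace E]
    [Nonempty E] (π : Measure E) :
    ∃ (ν : Measure ℝ) (g : ℝ → E), Measurable g ∧ ν.map g = π := by
  obtain ⟨f, hf⟩ := exists_measurableEmbedding_real E
  obtain ⟨g, hg, hgf⟩ := hf.exists_measurable_extend measurable_id fun _ => ‹Nonempty E›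
  refine ⟨π.map f, g, hg, ?_⟩
  rw [Measure.map_map hg hf.measurable, hgf, Measure.map_id]

theorem exists_real_coupling_of_map_eq [StandardBorelSpace β] [StandardBorelSpace γ]
    {P₁ P₂ : Measure α} [IsProbabilityMeasure P₁] [IsFiniteMeasure P₂] {U : α → β}
    {V : α → γ} (hU : Measurable U) (hV : Measurable V) (h : P₁.map U = P₂.map U) :
    ∃ (ν : Measure ℝ) (u : ℝ → β) (y z : ℝ → γ), IsProbabilityMeasure ν ∧
      Measurable u ∧ Measurable y ∧ Measurable z ∧
      ν.map (fun b => (u b, y b)) = P₁.map (fun a => (U a, V a)) ∧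
      ν.map (fun b => (u b, z b)) = P₂.map (fun a => (U a, V a)) := by
  obtain ⟨a⟩ := nonempty_of_isProbabilityMeasure P₁
  have : Nonempty β := ⟨U a⟩
  have : Nonempty γ := ⟨V a⟩
  obtain ⟨π, hπ₁, hπ₂⟩ := exists_gluing_of_fst_eq (ρ₁ := P₁.map fun a => (U a, V a))
    (ρ₂ := P₂.map fun a => (U a, V a)) (by rwa [Measure.fst_map_prodMk hV,
      Measure.fst_map_prodMk hV])
  obtain ⟨ν, g, hg, hνg⟩ := exists_measure_real_map_eq π
  have hν₁ : ν.map (fun b => ((g b).1, (g b).2.1)) = P₁.map fun a => (U a, V a) := by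
    rw [← hπ₁, ← hνg, Measure.map_map (by fun_prop) hg]; rfl
  have hν₂ : ν.map (fun b => ((g b).1, (g b).2.2)) = P₂.map fun a => (U a, V a) := by
    rw [← hπ₂, ← hνg, Measure.map_map (by fun_prop) hg]; rfl
  have : IsProbabilityMeasure (ν.map fun b => ((g b).1, (g b).2.1)) :=
    hν₁ ▸ Measure.isProbabilityMeasure_map (by fun_prop)
  exact ⟨ν, fun b => (g b).1, fun b => (g b).2.1, fun b => (g b).2.2,
    Measure.isProbabilityMeasure_of_map fun b => ((g b).1, (g b).2.1), by fun_prop, by fun_prop,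
    by fun_prop, hν₁, hν₂⟩

end Coupling

section GDependent

variable {n : ℕ} {p : Fin n → Fin n} {v j : Fin n} {Ω : Fin n → Type*} {α : Type*}
  {X : ∀ i, α → Ω i}

open Classical in
noncomputable def lowerSubtree (p : Fin n → Fin n) (v : Fin n) : Finset (Fin n) :=
  {j | InLowerSubtree p v j}

open Classical in
noncomputable def outsideSubtree (p : Fin n → Fin n) (v : Fin n) : Finset (Fin n) :=
  {j | ¬ InLowerSubtree p v j ∧ j ≠ p v}

@[simp]
theorem mem_lowerSubtree : j ∈ lowerSubtree p v ↔ InLowerSubtree p v j := by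
  simp [lowerSubtree]

@[simp]
theorem mem_outsideSubtree :
    j ∈ outsideSubtree p v ↔ ¬ InLowerSubtree p v j ∧ j ≠ p v := by
  simp [outsideSubtree]

theorem mem_outsideSubtree_of_lt (hj : v < j) (hjp : j ≠ p v) : j ∈ outsideSubtree p v :=
  mem_outsideSubtree.2 ⟨fun h => h.le.not_gt hj, hjp⟩

noncomputable def assemble (p : Fin n → Fin n) (v : Fin n) (c : ∀ j, Ω j)
    (w : ∀ i : outsideSubtree p v, Ω i) (y : ∀ j, Ω j) : ∀ j, Ω j :=
  fun j => if j ≤ v then c j else if h : j ∈ outsideSubtree p v then w ⟨j, h⟩ else y j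

theorem measurable_assemble [∀ i, MeasurableSpace (Ω i)] (c : ∀ j, Ω j) :
    Measurable fun z : (∀ i : outsideSubtree p v, Ω i) × (∀ j, Ω j) =>
      assemble p v c z.1 z.2 := by
  refine measurable_pi_lambda _ fun j => ?_
  unfold assemble
  split_ifs <;> fun_prop

theorem assemble_of_le {c : ∀ j, Ω j} {w : ∀ i : outsideSubtree p v, Ω i} {y : ∀ j, Ω j}
    (hj : j ≤ v) : assemble p v c w y j = c j :=
  if_pos hj

theorem assemble_congr {c c' y y' : ∀ j, Ω j} (w : ∀ i : outsideSubtree p v, Ω i)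
    (hjp : j ≠ p v) (hc : c j = c' j) : assemble p v c w y j = assemble p v c' w y' j := by
  unfold assemble
  by_cases hj : j ≤ v
  · rw [if_pos hj, if_pos hj, hc]
  · have hmem := mem_outsideSubtree_of_lt (not_le.1 hj) hjp
    rw [if_neg hj, if_neg hj, dif_pos hmem, dif_pos hmem]

theorem assemble_restrict {c y : ∀ j, Ω j} (hy : ∀ j, j ≤ v → y j = c j) :
    assemble p v c (fun i => y i) y = y := by
  funext j
  unfold assemble
  split_ifs with hj
  · exact (hy j hj).symm
  · rfl
  · rfl

theorem measurableSet_setOf_forall_le_eq [MeasurableSpace α] [∀ i, MeasurableSpace (Ω i)]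
    [∀ i, MeasurableSingletonClass (Ω i)]
    (hX : ∀ i, Measurable (X i)) (c : ∀ j, Ω j) :
    MeasurableSet {a | ∀ j, j ≤ v → X j a = c j} :=
  measurable_pi_lambda _ hX (.pi (Set.to_countable _) fun j _ => measurableSet_singleton (c j))

theorem setOf_forall_lt_and_eq_eq_update (x : ∀ j, Ω j) (x' : Ω v) :
    {a | (∀ j, j < v → X j a = x j) ∧ X v a = x'} =
      {a | ∀ j, j ≤ v → X j a = Function.update x v x' j} := by
  ext a
  refine ⟨fun ⟨hlt, hv⟩ j hj => ?_, fun h => ⟨fun j hj => ?_, ?_⟩⟩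
  · rcases hj.lt_or_eq with hj | rfl
    · rw [Function.update_of_ne hj.ne]
      exact hlt j hj
    · rwa [Function.update_self]
  · simpa [hj.ne] using h j hj.le
  · simpa using h v le_rfl

theorem setOf_forall_le_eq_eq_inter (hvp : v < p v) (X : ∀ i, α → Ω i) (c : ∀ j, Ω j) :
    {a | ∀ j, j ≤ v → X j a = c j} =
      (fun a (i : lowerSubtree p v) => X i a) ⁻¹' Set.univ.pi (fun i => {c i}) ∩
        (fun a (i : outsideSubtree p v) => X i a) ⁻¹'
          Set.pi {i | (i : Fin n) ≤ v} fun i => {c i} := by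
  ext a
  simp only [Set.mem_ofPred_eq, Set.mem_inter_iff, Set.mem_preimage, Set.mem_pi,
    Set.mem_singleton_iff, Set.mem_univ, true_implies, Subtype.forall, mem_lowerSubtree,
    mem_outsideSubtree]
  refine ⟨fun h => ⟨fun i hi => h i hi.le, fun i _ hi => h i hi⟩,
    fun ⟨hin, hout⟩ j hj => ?_⟩
  by_cases hjv : InLowerSubtree p v j
  · exact hin j hjv
  · exact hout j ⟨hjv, (hj.trans_lt hvp).ne⟩ hj

theorem GDependent.map_cond_eq_of_eq_outside [MeasurableSpace α] [∀ i, MeasurableSpace (Ω i)]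
    {μ : Measure α} [IsFiniteMeasure μ] [∀ i, MeasurableSingletonClass (Ω i)]
    {G : SimpleGraph (Fin n)} (hdep : GDependent μ G X) (hG : G.IsTree)
    (hp : IsOrderedParentMap G p) (hv : (v : ℕ) + 1 < n) (hX : ∀ i, Measurable (X i))
    {c c' : ∀ j, Ω j} (hcc' : ∀ j, ¬ InLowerSubtree p v j → c j = c' j)
    (hc : μ {a | ∀ j, j ≤ v → X j a = c j} ≠ 0)
    (hc' : μ {a | ∀ j, j ≤ v → X j a = c' j} ≠ 0) :
    (μ[|{a | ∀ j, j ≤ v → X j a = c j}]).map (fun a (i : outsideSubtree p v) => X i a) =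
      (μ[|{a | ∀ j, j ≤ v → X j a = c' j}]).map
        (fun a (i : outsideSubtree p v) => X i a) := by
  have hindep : IndepFun (fun a (i : lowerSubtree p v) => X i a)
      (fun a (i : outsideSubtree p v) => X i a) μ :=
    hdep _ _ (Finset.disjoint_left.2 fun i hi ho => (mem_outsideSubtree.1 ho).1
        (mem_lowerSubtree.1 hi))
      fun i hi j hj => not_adj_of_inLowerSubtree hG hp (mem_lowerSubtree.1 hi)
        (mem_outsideSubtree.1 hj).1 (mem_outsideSubtree.1 hj).2
  have hout : (Set.pi {i : outsideSubtree p v | (i : Fin n) ≤ v} fun i => {c i}) =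
      Set.pi {i : outsideSubtree p v | (i : Fin n) ≤ v} fun i => {c' i} :=
    Set.pi_congr rfl fun i _ => by rw [hcc' _ (mem_outsideSubtree.1 i.2).1]
  have hmeas_in (d : ∀ j, Ω j) : MeasurableSet (Set.univ.pi fun i : lowerSubtree p v => {d i}) :=
    .pi (Set.to_countable _) fun i _ => measurableSet_singleton (d i)
  have hmeas_out :
      MeasurableSet (Set.pi {i : outsideSubtree p v | (i : Fin n) ≤ v} fun i => {c i}) :=
    .pi (Set.to_countable _) fun i _ => measurableSet_singleton (c i)
  simp only [setOf_forall_le_eq_eq_inter (hp v hv).2, ← hout] at hc hc' ⊢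
  rw [hindep.map_cond_inter_preimage (by fun_prop) (by fun_prop) (hmeas_in c) hmeas_out hc,
    hindep.map_cond_inter_preimage (by fun_prop) (by fun_prop) (hmeas_in c') hmeas_out hc']

theorem map_assemble_eq_map_cond [MeasurableSpace α] [∀ i, MeasurableSpace (Ω i)]
    [∀ i, MeasurableSingletonClass (Ω i)] {μ : Measure α} (hX : ∀ i, Measurable (X i))
    {c : ∀ j, Ω j} {β : Type*} [MeasurableSpace β] {ν : Measure β}
    {u : β → ∀ i : outsideSubtree p v, Ω i} {y : β → ∀ j, Ω j} (hu : Measurable u)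
    (hy : Measurable y)
    (h : ν.map (fun b => (u b, y b)) = (μ[|{a | ∀ j, j ≤ v → X j a = c j}]).map
      fun a => ((fun i : outsideSubtree p v => X i a), fun j => X j a)) :
    ν.map (fun b => assemble p v c (u b) (y b)) =
      (μ[|{a | ∀ j, j ≤ v → X j a = c j}]).map fun a j => X j a := by
  rw [show (fun b => assemble p v c (u b) (y b)) = (fun z => assemble p v c z.1 z.2) ∘
      fun b => (u b, y b) from rfl, ← Measure.map_map (measurable_assemble c) (hu.prodMk hy), h,
    Measure.map_map (measurable_assemble c) (by fun_prop)]
  exact Measure.map_congr <| (ae_cond_mem (measurableSet_setOf_forall_le_eq hX c)).mono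
    fun a ha => assemble_restrict ha

end GDependent

theorem coupling_exists_general {n : ℕ} {Ω : Fin n → Type*}
    [∀ i, MeasurableSpace (Ω i)] [∀ i, TopologicalSpace (Ω i)]
    [∀ i, PolishSpace (Ω i)] [∀ i, BorelSpace (Ω i)]
    {α : Type*} [MeasurableSpace α] (μ : Measure α) [IsProbabilityMeasure μ]
    (G : SimpleGraph (Fin n)) (hG : G.IsTree)
    (p : Fin n → Fin n) (hp : IsOrderedParentMap G p)
    (X : ∀ i, α → Ω i) (hX : ∀ i, Measurable (X i))
    (hdep : GDependent μ G X)
    (v : Fin n) (hv : (v : ℕ) + 1 < n)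
    (x : ∀ j, Ω j) (x' : Ω v)
    (hA : μ {a | ∀ j, j ≤ v → X j a = x j} ≠ 0)
    (hA' : μ {a | (∀ j, j < v → X j a = x j) ∧ X v a = x'} ≠ 0) :
    Nonempty (CouplingWitness μ X p v x x') := by
  rw [setOf_forall_lt_and_eq_eq_update] at hA'
  have := cond_isProbabilityMeasure hA
  have := cond_isProbabilityMeasure hA'
  have hlaw := hdep.map_cond_eq_of_eq_outside hG hp hv hX (c' := Function.update x v x')
    (fun j hj => (Function.update_of_ne (by rintro rfl; exact hj (inLowerSubtree_self p j))
      x' x).symm) hA hA'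
  obtain ⟨ν, u, y, z, hν, hu, hy, hz, hνy, hνz⟩ :=
    exists_real_coupling_of_map_eq (by fun_prop) (measurable_pi_lambda _ hX) hlaw
  refine ⟨⟨⟨ℝ⟩, ν, hν,
    fun j b => assemble p v x (u b) (y b) j,
    fun j b => assemble p v (Function.update x v x') (u b) (z b) j,
    fun j => (measurable_pi_apply j).comp ((measurable_assemble _).comp (hu.prodMk hy)),
    fun j => (measurable_pi_apply j).comp ((measurable_assemble _).comp (hu.prodMk hz)),
    map_assemble_eq_map_cond hX hu hy hνy,
    by rw [setOf_forall_lt_and_eq_eq_update]; exact map_assemble_eq_map_cond hX hu hz hνz,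
    fun b j hj => assemble_of_le hj,
    fun b j hj => (assemble_of_le hj.le).trans (Function.update_of_ne hj.ne x' x),
    fun b => (assemble_of_le le_rfl).trans (Function.update_self v x' x),
    fun b j hvj hjp => assemble_congr _ hjp (Function.update_of_ne hvj.ne' x' x).symm,
    fun b j hjv hjp => assemble_congr _ hjp (Function.update_of_ne hjv x' x).symm⟩⟩

theorem coupling_exists {n : ℕ} {Ω : Fin n → Type*}
    [∀ i, MeasurableSpace (Ω i)] [∀ i, TopologicalSpace (Ω i)]
    [∀ i, PolishSpace (Ω i)] [∀ i, BorelSpace (Ω i)]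
    [∀ i, MeasurableSingletonClass (Ω i)]
    {α : Type*} [MeasurableSpace α] (μ : Measure α) [IsProbabilityMeasure μ]
    (G : SimpleGraph (Fin n)) (hG : G.IsTree)
    (p : Fin n → Fin n) (hp : IsOrderedParentMap G p)
    (X : ∀ i, α → Ω i) (hX : ∀ i, Measurable (X i))
    (hdep : GDependent μ G X)
    (v : Fin n) (hv : (v : ℕ) + 1 < n)
    (x : ∀ j, Ω j) (x' : Ω v)
    (hA : μ {a | ∀ j, j ≤ v → X j a = x j} ≠ 0)
    (hA' : μ {a | (∀ j, j < v → X j a = x j) ∧ X v a = x'} ≠ 0) :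
    Nonempty (CouplingWitness μ X p v x x') :=
  coupling_exists_general μ G hG p hp X hX hdep v hv x x' hA hA'
end

section
/- Let G be a tree on [n], rooted at vertex n, Ordered (j is a descendant of i only if j < i), with parent map p. Let f: Ω → ℝ be c-Lipschitz for c ∈ ℝ₊ⁿ and let X be a G-dependent Ω-valued random vector. Then for every i ∈ [n−1], every x ∈ Ω, and every x'_i ∈ Ω_i, E[ f(X) | X_{[i]} = x_{[i]} ] − E[ f(X) | X_{[i−1]} = x_{[i−1]}, X_i = x'_i ] ≤ c_i + c_{p_i}. -/
open MeasureTheory ProbabilityTheory BigOperators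

/-! Let `S` be the subtree of `v` and `T` the vertices outside `S ∪ {p v}`. In a tree the only
edge leaving `S` is `{v, p v}`, so `X_S` and `X_T` are independent. Every `j ≤ v` lies in
`S ∪ T`, so both conditioning events have the form `{X_S = s} ∩ {X_T ∈ B}` with the same `B`,
and under either of them `X_T` has the law of `X_T` given `X_T ∈ B`. On each event `X` is a
function of `(X_T, X_{p v})` whose values on `S` are known and differ between the two events only
at `v`. Disintegrating along `X_T`, for each value of `X_T` and any two values of `X_{p v}` the
integrands differ only in coordinates `v` and `p v`, hence by at most `c v + c (p v)`. -/

lemma Fin.card_filter_add_one_lt (n : ℕ) :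
    ({i : Fin n | (i : ℕ) + 1 < n} : Finset (Fin n)).card = n - 1 := by
  rw [← Finset.card_map Fin.valEmbedding, ← Finset.card_range (n - 1)]
  congr 1
  ext k
  simp only [Finset.mem_map, Finset.mem_filter, Finset.mem_univ, true_and, Fin.valEmbedding_apply,
    Finset.mem_range]
  exact ⟨by rintro ⟨i, hi, rfl⟩; omega,
    fun hk => ⟨⟨k, by omega⟩, by simp only; omega, rfl⟩⟩

namespace IsOrderedParentMap

variable {n : ℕ} {G : SimpleGraph (Fin n)} {p : Fin n → Fin n}

/-- The `n - 1` edges `{i, p i}` are distinct, so they exhaust the `n - 1` edges of the tree. -/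
lemma edgeFinset_eq_image [DecidableRel G.Adj] (hG : G.IsTree) (hp : IsOrderedParentMap G p) :
    G.edgeFinset = ({i | (i : ℕ) + 1 < n} : Finset (Fin n)).image (fun i => s(i, p i)) := by
  have hinj : Set.InjOn (fun i => s(i, p i)) ({i | (i : ℕ) + 1 < n} : Finset (Fin n)) := by
    intro i hi j hj hij
    simp only [Finset.mem_coe, Finset.mem_filter, Finset.mem_univ, true_and] at hi hj
    rcases Sym2.eq_iff.1 hij with ⟨h, -⟩ | ⟨hij, hji⟩
    · exact h
    · exact absurd ((hp i hi).2.trans (hji ▸ hij ▸ (hp j hj).2)) (lt_irrefl i)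
  symm
  apply Finset.eq_of_subset_of_card_le
  · intro e he
    obtain ⟨i, hi, rfl⟩ := Finset.mem_image.1 he
    exact SimpleGraph.mem_edgeFinset.2 (hp i (Finset.mem_filter.1 hi).2).1
  · have := hG.card_edgeFinset
    rw [Fintype.card_fin] at this
    rw [Finset.card_image_of_injOn hinj, Fin.card_filter_add_one_lt]
    omega

lemma eq_parent_of_adj (hG : G.IsTree) (hp : IsOrderedParentMap G p) {a b : Fin n}
    (hab : G.Adj a b) (hlt : a < b) : (a : ℕ) + 1 < n ∧ p a = b := by
  classical
  have hmem : s(a, b) ∈ G.edgeFinset := SimpleGraph.mem_edgeFinset.2 hab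
  rw [hp.edgeFinset_eq_image hG] at hmem
  obtain ⟨i, hi, hie⟩ := Finset.mem_image.1 hmem
  have hi : (i : ℕ) + 1 < n := (Finset.mem_filter.1 hi).2
  rcases Sym2.eq_iff.1 hie with ⟨rfl, hb⟩ | ⟨rfl, rfl⟩
  · exact ⟨hi, hb⟩
  · exact absurd ((hp i hi).2.trans hlt) (lt_irrefl _)

end IsOrderedParentMap

/-- The subtree of `v`. Only non-root vertices may climb to their parent, since the parent of the
root `n - 1` is junk. -/
inductive IsDescendant {n : ℕ} (p : Fin n → Fin n) (v : Fin n) : Fin n → Prop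
  | refl : IsDescendant p v v
  | child {j : Fin n} : (j : ℕ) + 1 < n → IsDescendant p v (p j) → IsDescendant p v j

namespace IsDescendant

variable {n : ℕ} {G : SimpleGraph (Fin n)} {p : Fin n → Fin n} {v j : Fin n}

lemma le (hp : IsOrderedParentMap G p) (hj : IsDescendant p v j) : j ≤ v := by
  induction hj with
  | refl => exact le_rfl
  | child hroot _ ih => exact ((hp _ hroot).2.trans_le ih).le

lemma eq_parent_of_adj (hG : G.IsTree) (hp : IsOrderedParentMap G p) {k : Fin n}
    (hj : IsDescendant p v j) (hk : ¬ IsDescendant p v k) (hjk : G.Adj j k) : k = p v := by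
  rcases lt_or_gt_of_ne (G.ne_of_adj hjk) with hlt | hgt
  · obtain ⟨-, rfl⟩ := hp.eq_parent_of_adj hG hjk hlt
    cases hj with
    | refl => rfl
    | child _ hpj => exact absurd hpj hk
  · obtain ⟨hroot, hpk⟩ := hp.eq_parent_of_adj hG hjk.symm hgt
    exact absurd (child hroot (hpk ▸ hj)) hk

end IsDescendant

namespace CLipschitzOn

variable {ι : Type*} [Fintype ι] {Ω : ι → Type*} {c : ι → ℝ} {f : (∀ i, Ω i) → ℝ}

lemma abs_sub_le_sum (hLip : CLipschitzOn c f) (hc : ∀ i, 0 ≤ c i) {x y : ∀ i, Ω i}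
    (s : Finset ι) (hxy : ∀ i ∉ s, x i = y i) : |f x - f y| ≤ ∑ i ∈ s, c i := by
  classical
  refine (hLip x y).trans ?_
  rw [← Finset.sum_filter]
  refine Finset.sum_le_sum_of_subset_of_nonneg (fun i hi => ?_) fun i _ _ => hc i
  by_contra hs
  exact (Finset.mem_filter.1 hi).2 (hxy i hs)

lemma exists_abs_le (hLip : CLipschitzOn c f) (hc : ∀ i, 0 ≤ c i) :
    ∃ C, ∀ y, |f y| ≤ C := by
  rcases isEmpty_or_nonempty (∀ i, Ω i) with hΩ | ⟨⟨x⟩⟩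
  · exact ⟨0, fun y => hΩ.elim y⟩
  refine ⟨|f x| + ∑ i, c i, fun y => ?_⟩
  have := hLip.abs_sub_le_sum hc (x := y) (y := x) Finset.univ (by simp)
  have := abs_sub_abs_le_abs_sub (f y) (f x)
  linarith

lemma integrable_comp [∀ i, MeasurableSpace (Ω i)] (hLip : CLipschitzOn c f)
    (hc : ∀ i, 0 ≤ c i) (hf : Measurable f) {β : Type*} [MeasurableSpace β] {ρ : Measure β}
    [IsFiniteMeasure ρ] {g : β → ∀ i, Ω i} (hg : Measurable g) :
    Integrable (fun b => f (g b)) ρ := by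
  obtain ⟨C, hC⟩ := hLip.exists_abs_le hc
  exact .of_bound (hf.comp hg).aestronglyMeasurable C (.of_forall fun b => hC (g b))

end CLipschitzOn

section Comparison

variable {β γ : Type*} [MeasurableSpace β] [MeasurableSpace γ]

lemma integral_sub_integral_le_of_forall_sub_le {ρ ρ' : Measure β} [IsProbabilityMeasure ρ]
    [IsProbabilityMeasure ρ'] {F F' : β → ℝ} (hF : Integrable F ρ) (hF' : Integrable F' ρ')
    {r : ℝ} (h : ∀ z z', F z - F' z' ≤ r) : ∫ z, F z ∂ρ - ∫ z, F' z ∂ρ' ≤ r := by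
  have hlow : ∀ z, F z - r ≤ ∫ z', F' z' ∂ρ' := fun z => by
    simpa using integral_mono (integrable_const (F z - r)) hF' fun z' => by linarith [h z z']
  have := integral_mono hF (integrable_const (∫ z', F' z' ∂ρ' + r))
    fun z => by linarith [hlow z]
  simp only [integral_const, probReal_univ, one_smul] at this
  linarith

/-- Disintegrate both measures along their common first marginal and compare fibrewise. -/
lemma integral_sub_integral_le_of_fst_eq [StandardBorelSpace γ] [Nonempty γ]
    {ρ ρ' : Measure (β × γ)} [IsProbabilityMeasure ρ] [IsProbabilityMeasure ρ']
    (hfst : ρ.fst = ρ'.fst) {g g' : β × γ → ℝ} (hg : Integrable g ρ)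
    (hg' : Integrable g' ρ')
    {r : ℝ} (h : ∀ y z z', g (y, z) - g' (y, z') ≤ r) :
    ∫ q, g q ∂ρ - ∫ q, g' q ∂ρ' ≤ r := by
  have hfib' := hg'.condKernel_ae
  rw [← hfst] at hfib'
  rw [← Measure.integral_condKernel hg, ← Measure.integral_condKernel hg', ← hfst,
    ← integral_sub hg.integral_condKernel (hfst ▸ hg'.integral_condKernel)]
  calc _ ≤ ∫ _, r ∂ρ.fst := by
        refine integral_mono_ae (hg.integral_condKernel.sub
          (hfst ▸ hg'.integral_condKernel)) (integrable_const r) ?_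
        filter_upwards [hg.condKernel_ae, hfib'] with y hy hy'
        exact integral_sub_integral_le_of_forall_sub_le hy hy' (h y)
    _ = r := by simp

lemma integral_sub_integral_le_of_map_eq {α : Type*} [MeasurableSpace α] [StandardBorelSpace γ]
    [Nonempty γ] {ν ν' : Measure α} [IsProbabilityMeasure ν] [IsProbabilityMeasure ν']
    {Y : α → β} {Z : α → γ} (hY : Measurable Y) (hZ : Measurable Z)
    (hmap : ν.map Y = ν'.map Y)
    {g g' : β × γ → ℝ} (hg : Integrable g (ν.map fun a => (Y a, Z a)))
    (hg' : Integrable g' (ν'.map fun a => (Y a, Z a))) {r : ℝ}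
    (h : ∀ y z z', g (y, z) - g' (y, z') ≤ r) :
    ∫ a, g (Y a, Z a) ∂ν - ∫ a, g' (Y a, Z a) ∂ν' ≤ r := by
  have := Measure.isProbabilityMeasure_map (μ := ν) (hY.prodMk hZ).aemeasurable
  have := Measure.isProbabilityMeasure_map (μ := ν') (hY.prodMk hZ).aemeasurable
  rw [← integral_map (hY.prodMk hZ).aemeasurable hg.1,
    ← integral_map (hY.prodMk hZ).aemeasurable hg'.1]
  exact integral_sub_integral_le_of_fst_eq
    (by rwa [Measure.fst_map_prodMk hZ, Measure.fst_map_prodMk hZ]) hg hg' h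

end Comparison

lemma ProbabilityTheory.IndepFun.map_cond_inter_preimage_s10 {α β γ : Type*} [MeasurableSpace α]
    [MeasurableSpace β] [MeasurableSpace γ] {μ : Measure α} [IsFiniteMeasure μ] {W : α → β}
    {Y : α → γ} (hWY : IndepFun W Y μ) (hW : Measurable W) (hY : Measurable Y) {P : Set β}
    {Q : Set γ} (hP : MeasurableSet P) (hQ : MeasurableSet Q) (hWP : μ (W ⁻¹' P) ≠ 0) :
    (μ[|W ⁻¹' P ∩ Y ⁻¹' Q]).map Y = (μ.map Y)[|Q] := by
  have hmul := indepFun_iff_measure_inter_preimage_eq_mul.1 hWY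
  ext U hU
  rw [Measure.map_apply hY hU, cond_apply ((hW hP).inter (hY hQ)), cond_apply hQ,
    Measure.map_apply hY hQ, Measure.map_apply hY (hQ.inter hU), Set.inter_assoc,
    ← Set.preimage_inter, hmul _ _ hP (hQ.inter hU), hmul _ _ hP hQ,
    ENNReal.mul_inv (.inl hWP) (.inl (measure_ne_top _ _)), mul_mul_mul_comm,
    ENNReal.inv_mul_cancel hWP (measure_ne_top _ _), one_mul]

section Subtree

variable {n : ℕ} {Ω : Fin n → Type*} (p : Fin n → Fin n) (v : Fin n)

open Classical in
noncomputable def descendants : Finset (Fin n) := {j | IsDescendant p v j}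

open Classical in
noncomputable def outside : Finset (Fin n) := {j | ¬ IsDescendant p v j ∧ j ≠ p v}

def prefixEvent {α : Type*} (X : ∀ i, α → Ω i) (x : ∀ j, Ω j) (z : Ω v) : Set α :=
  {a | (∀ j < v, X j a = x j) ∧ X v a = z}

noncomputable def fillOutside (ξ : ∀ j, Ω j) (q : (∀ j : outside p v, Ω j) × Ω (p v)) :
    ∀ j, Ω j :=
  Function.update (Function.updateFinset ξ (outside p v) q.1) (p v) q.2

variable {p v} {G : SimpleGraph (Fin n)} {j : Fin n}

lemma mem_descendants : j ∈ descendants p v ↔ IsDescendant p v j := by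
  simp [descendants]

lemma mem_outside : j ∈ outside p v ↔ ¬ IsDescendant p v j ∧ j ≠ p v := by
  simp [outside]

lemma measurable_fillOutside [∀ i, MeasurableSpace (Ω i)] (ξ : ∀ j, Ω j) :
    Measurable (fillOutside p v ξ) :=
  (measurable_update' (a := p v)).comp
    ((measurable_updateFinset.comp measurable_fst).prodMk measurable_snd)

lemma fillOutside_apply_of_ne {ξ : ∀ j, Ω j} {q : (∀ j : outside p v, Ω j) × Ω (p v)}
    (hj : j ∉ outside p v) (hjp : j ≠ p v) : fillOutside p v ξ q j = ξ j := by
  simp [fillOutside, Function.update_of_ne hjp, Function.updateFinset, hj]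

lemma GDependent.indepFun_descendants_outside {α : Type*} [MeasurableSpace α] {μ : Measure α}
    [∀ i, MeasurableSpace (Ω i)] {X : ∀ i, α → Ω i} (hG : G.IsTree)
    (hp : IsOrderedParentMap G p) (hdep : GDependent μ G X) :
    IndepFun (fun a (i : descendants p v) => X i a) (fun a (j : outside p v) => X j a) μ := by
  refine hdep _ _ (Finset.disjoint_left.2 fun j hj hj' => ?_) fun i hi j hj hij => ?_
  · exact (mem_outside.1 hj').1 (mem_descendants.1 hj)
  · exact (mem_outside.1 hj).2
      ((mem_descendants.1 hi).eq_parent_of_adj hG hp (mem_outside.1 hj).1 hij)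

lemma prefixEvent_eq_preimage_inter_preimage {α : Type*} {X : ∀ i, α → Ω i}
    (hp : IsOrderedParentMap G p) (hv : (v : ℕ) + 1 < n) (x : ∀ j, Ω j) (z : Ω v) :
    prefixEvent v X x z =
      (fun a (i : descendants p v) => X i a) ⁻¹'
          {fun i : descendants p v => Function.update x v z i} ∩
        (fun a (j : outside p v) => X j a) ⁻¹'
          {y | ∀ j : outside p v, (j : Fin n) < v → y j = x j} := by
  have hvp : v < p v := (hp v hv).2
  ext a
  simp only [prefixEvent, Set.mem_inter_iff, Set.mem_preimage, Set.mem_singleton_iff, funext_iff,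
    Set.mem_ofPred_eq, Subtype.forall]
  constructor
  · rintro ⟨hlt, hv⟩
    refine ⟨fun i hi => ?_, fun j _ hj => hlt j hj⟩
    rcases ((mem_descendants.1 hi).le hp).lt_or_eq with hi | rfl
    · rw [Function.update_of_ne hi.ne, hlt i hi]
    · rw [Function.update_self, hv]
  · rintro ⟨hdesc, hout⟩
    refine ⟨fun j hj => ?_, by simpa using hdesc v (mem_descendants.2 .refl)⟩
    by_cases hjd : IsDescendant p v j
    · simpa [Function.update_of_ne hj.ne] using hdesc j (mem_descendants.2 hjd)
    · exact hout j (mem_outside.2 ⟨hjd, (hj.trans hvp).ne⟩) hj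

lemma eq_fillOutside_of_mem_prefixEvent {α : Type*} {X : ∀ i, α → Ω i}
    (hp : IsOrderedParentMap G p) {x : ∀ j, Ω j} {z : Ω v} {a : α}
    (ha : a ∈ prefixEvent v X x z) :
    (fun j => X j a) = fillOutside p v (Function.update x v z)
      ((fun j : outside p v => X j a), X (p v) a) := by
  funext j
  by_cases hjp : j = p v
  · subst hjp
    simp [fillOutside]
  by_cases hjo : j ∈ outside p v
  · simp [fillOutside, Function.update_of_ne hjp, Function.updateFinset, hjo]
  rw [fillOutside_apply_of_ne hjo hjp]
  have hjd : IsDescendant p v j := by simpa [mem_outside, hjp] using hjo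
  rcases (hjd.le hp).lt_or_eq with hj | rfl
  · rw [Function.update_of_ne hj.ne, ha.1 j hj]
  · rw [Function.update_self, ha.2]

end Subtree

section Conditioning

variable {n : ℕ} {Ω : Fin n → Type*} [∀ i, MeasurableSpace (Ω i)]
  [∀ i, MeasurableSingletonClass (Ω i)] {α : Type*} [MeasurableSpace α] {μ : Measure α}
  {G : SimpleGraph (Fin n)} {p : Fin n → Fin n} {v : Fin n} {X : ∀ i, α → Ω i}

omit [∀ i, MeasurableSingletonClass (Ω i)] in
lemma measurable_restrict_family (hX : ∀ i, Measurable (X i)) (s : Finset (Fin n)) :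
    Measurable fun a (j : s) => X j a :=
  measurable_pi_lambda _ fun j => hX j

lemma measurableSet_setOf_forall_lt_eq {s : Finset (Fin n)} (x : ∀ j, Ω j) :
    MeasurableSet {y : ∀ j : s, Ω j | ∀ j : s, (j : Fin n) < v → y j = x j} := by
  simp only [Set.ofPred_forall]
  exact .iInter fun j => .iInter fun _ => measurable_pi_apply j (measurableSet_singleton _)

lemma measurableSet_prefixEvent (hX : ∀ i, Measurable (X i)) (x : ∀ j, Ω j) (z : Ω v) :
    MeasurableSet (prefixEvent v X x z) := by
  simp only [prefixEvent, Set.ofPred_and, Set.ofPred_forall]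
  exact (MeasurableSet.iInter fun j => .iInter fun _ => hX j (measurableSet_singleton _)).inter
    (hX v (measurableSet_singleton _))

/-- The right-hand side does not depend on `z`: the variables outside the subtree of `v` are
independent of the subtree. -/
lemma map_cond_prefixEvent [IsFiniteMeasure μ] (hG : G.IsTree) (hp : IsOrderedParentMap G p)
    (hv : (v : ℕ) + 1 < n) (hX : ∀ i, Measurable (X i)) (hdep : GDependent μ G X)
    (x : ∀ j, Ω j) (z : Ω v) (hE : μ (prefixEvent v X x z) ≠ 0) :
    (μ[|prefixEvent v X x z]).map (fun a (j : outside p v) => X j a) =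
      (μ.map fun a (j : outside p v) => X j a)[|
        {y | ∀ j : outside p v, (j : Fin n) < v → y j = x j}] := by
  rw [prefixEvent_eq_preimage_inter_preimage hp hv] at hE ⊢
  exact (hdep.indepFun_descendants_outside hG hp).map_cond_inter_preimage_s10
    (measurable_restrict_family hX _) (measurable_restrict_family hX _)
    (measurableSet_singleton _) (measurableSet_setOf_forall_lt_eq x)
    (measure_mono_null Set.inter_subset_left |>.mt hE)

lemma integral_cond_prefixEvent_eq (hp : IsOrderedParentMap G p) (hX : ∀ i, Measurable (X i))
    (f : (∀ i, Ω i) → ℝ) (x : ∀ j, Ω j) (z : Ω v) :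
    ∫ a, f (fun j => X j a) ∂(μ[|prefixEvent v X x z]) =
      ∫ a, f (fillOutside p v (Function.update x v z) ((fun j : outside p v => X j a), X (p v) a))
        ∂(μ[|prefixEvent v X x z]) :=
  integral_congr_ae ((ae_cond_mem (measurableSet_prefixEvent hX x z)).mono
    fun _ ha => congrArg f (eq_fillOutside_of_mem_prefixEvent hp ha))

end Conditioning

theorem conditional_expectation_difference_general {n : ℕ} {Ω : Fin n → Type*}
    [∀ i, MeasurableSpace (Ω i)] [∀ i, TopologicalSpace (Ω i)]
    [∀ i, PolishSpace (Ω i)] [∀ i, BorelSpace (Ω i)]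
    {α : Type*} [MeasurableSpace α] (μ : Measure α) [IsProbabilityMeasure μ]
    (G : SimpleGraph (Fin n)) (hG : G.IsTree)
    (p : Fin n → Fin n) (hp : IsOrderedParentMap G p)
    (c : Fin n → ℝ) (hc : ∀ i, 0 ≤ c i)
    (f : (∀ i, Ω i) → ℝ) (hf : Measurable f) (hLip : CLipschitzOn c f)
    (X : ∀ i, α → Ω i) (hX : ∀ i, Measurable (X i))
    (hdep : GDependent μ G X)
    (v : Fin n) (hv : (v : ℕ) + 1 < n)
    (x : ∀ j, Ω j) (x' : Ω v)
    (hA : μ {a | ∀ j, j ≤ v → X j a = x j} ≠ 0)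
    (hA' : μ {a | (∀ j, j < v → X j a = x j) ∧ X v a = x'} ≠ 0) :
    (∫ a, f (fun j => X j a) ∂(μ[|{a | ∀ j, j ≤ v → X j a = x j}]))
      - (∫ a, f (fun j => X j a) ∂(μ[|{a | (∀ j, j < v → X j a = x j) ∧ X v a = x'}]))
      ≤ c v + c (p v) := by
  have hvp : v < p v := (hp v hv).2
  have : Nonempty (Ω (p v)) := ⟨x (p v)⟩
  have hevent : {a | ∀ j, j ≤ v → X j a = x j} = prefixEvent v X x (x v) := by
    ext a
    simp only [prefixEvent, Set.mem_ofPred_eq, le_iff_lt_or_eq, or_imp, forall_and, forall_eq]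
  change μ (prefixEvent v X x x') ≠ 0 at hA'
  rw [hevent] at hA ⊢
  change _ - ∫ a, _ ∂(μ[|prefixEvent v X x x']) ≤ _
  have := cond_isProbabilityMeasure hA
  have := cond_isProbabilityMeasure hA'
  rw [integral_cond_prefixEvent_eq hp hX, integral_cond_prefixEvent_eq hp hX]
  refine integral_sub_integral_le_of_map_eq (measurable_restrict_family hX _) (hX (p v))
    (by rw [map_cond_prefixEvent hG hp hv hX hdep _ _ hA,
      map_cond_prefixEvent hG hp hv hX hdep _ _ hA'])
    (hLip.integrable_comp hc hf (measurable_fillOutside _))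
    (hLip.integrable_comp hc hf (measurable_fillOutside _)) fun y z z' => ?_
  refine (le_abs_self _).trans ((hLip.abs_sub_le_sum hc {v, p v} fun j hj => ?_).trans_eq
    (Finset.sum_pair hvp.ne))
  simp only [Finset.mem_insert, Finset.mem_singleton, not_or] at hj
  simp [fillOutside, Function.update_of_ne hj.2, Function.updateFinset, Function.update_of_ne hj.1]

theorem conditional_expectation_difference {n : ℕ} {Ω : Fin n → Type*}
    [∀ i, MeasurableSpace (Ω i)] [∀ i, TopologicalSpace (Ω i)]
    [∀ i, PolishSpace (Ω i)] [∀ i, BorelSpace (Ω i)]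
    [∀ i, MeasurableSingletonClass (Ω i)]
    {α : Type*} [MeasurableSpace α] (μ : Measure α) [IsProbabilityMeasure μ]
    (G : SimpleGraph (Fin n)) (hG : G.IsTree)
    (p : Fin n → Fin n) (hp : IsOrderedParentMap G p)
    (c : Fin n → ℝ) (hc : ∀ i, 0 ≤ c i)
    (f : (∀ i, Ω i) → ℝ) (hf : Measurable f) (hLip : CLipschitzOn c f)
    (X : ∀ i, α → Ω i) (hX : ∀ i, Measurable (X i))
    (hdep : GDependent μ G X)
    (v : Fin n) (hv : (v : ℕ) + 1 < n)
    (x : ∀ j, Ω j) (x' : Ω v)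
    (hA : μ {a | ∀ j, j ≤ v → X j a = x j} ≠ 0)
    (hA' : μ {a | (∀ j, j < v → X j a = x j) ∧ X v a = x'} ≠ 0) :
    (∫ a, f (fun j => X j a) ∂(μ[|{a | ∀ j, j ≤ v → X j a = x j}]))
      - (∫ a, f (fun j => X j a) ∂(μ[|{a | (∀ j, j < v → X j a = x j) ∧ X v a = x'}]))
      ≤ c v + c (p v) :=
  conditional_expectation_difference_general μ G hG p hp c hc f hf hLip X hX hdep v hv x x' hA hA'
end
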